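/- arXiv:2007.10196 — 4 statements merged into one kernel-verified Lean document; each statement's English description precedes it below -/
import Mathlib

section
/- Let P_0, P_1, P_2 be the unique polynomials of degree at most 2 interpolating a function u at the stencils {x_{i-2},x_{i-1},x_i}, {x_{i-1},x_i,x_{i+1}}, {x_i,x_{i+1},x_{i+2}} respectively, on a uniform grid of spacing h. Then the combination C_0(x)P_0(x) + C_1(x)P_1(x) + C_2(x)P_2(x), with C_0(x)=(x-x_{i+1})(x-x_{i+2})/(12h^2), C_1(x)=-(x-x_{i-2})(x-x_{i+2})/(6h^2), C_2(x)=(x-x_{i-2})(x-x_{i-1})/(12h^2), equals the unique polynomial of degree at most 4 interpolating u at the five points x_{i-2},...,x_{i+2}. -/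
/-!
On a uniform grid the three weights sum to the constant `1`, and at each of the five nodes every
weight whose substencil misses the node vanishes there. Hence the combination, a polynomial of
degree at most `4`, agrees with `u` at all five nodes, and so it is the interpolant `Q`.
-/

open Polynomial

section QuadraticWeight

variable {K : Type*} [Field K]

noncomputable def quadraticWeight (c a b : K) : K[X] :=
  C c⁻¹ * ((X - C a) * (X - C b))

lemma eval_quadraticWeight (c a b t : K) :
    (quadraticWeight c a b).eval t = (t - a) * (t - b) / c := by
  simp [quadraticWeight, div_eq_inv_mul]

lemma degree_quadraticWeight_le (c a b : K) : (quadraticWeight c a b).degree ≤ 2 := by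
  unfold quadraticWeight
  compute_degree

end QuadraticWeight

lemma add_mul_add_mul_eq_of_add_add_eq_one {R : Type*} [CommRing R] {w₀ w₁ w₂ p₀ p₁ p₂ c : R}
    (hw : w₀ + w₁ + w₂ = 1) (h₀ : w₀ = 0 ∨ p₀ = c) (h₁ : w₁ = 0 ∨ p₁ = c)
    (h₂ : w₂ = 0 ∨ p₂ = c) :
    w₀ * p₀ + w₁ * p₁ + w₂ * p₂ = c := by
  have key : ∀ {w p : R}, (w = 0 ∨ p = c) → w * (p - c) = 0 := by
    rintro w p (rfl | rfl) <;> simp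
  linear_combination key h₀ + key h₁ + key h₂ + c * hw

section WenoCombination

variable {K : Type*} [Field K]

noncomputable def wenoCombination (h : K) (x : ℤ → K) (i : ℤ) (P0 P1 P2 : K[X]) : K[X] :=
  quadraticWeight (12 * h ^ 2) (x (i + 1)) (x (i + 2)) * P0
    + quadraticWeight (-(6 * h ^ 2)) (x (i - 2)) (x (i + 2)) * P1
    + quadraticWeight (12 * h ^ 2) (x (i - 2)) (x (i - 1)) * P2

variable {h x₀ : K} {x : ℤ → K}

lemma eval_wenoCombination (i : ℤ) (P0 P1 P2 : K[X]) (t : K) :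
    (wenoCombination h x i P0 P1 P2).eval t =
      ((t - x (i + 1)) * (t - x (i + 2)) / (12 * h ^ 2)) * P0.eval t
        + (-((t - x (i - 2)) * (t - x (i + 2))) / (6 * h ^ 2)) * P1.eval t
        + ((t - x (i - 2)) * (t - x (i - 1)) / (12 * h ^ 2)) * P2.eval t := by
  simp only [wenoCombination, eval_add, eval_mul, eval_quadraticWeight, div_neg, neg_div]

lemma degree_wenoCombination_le (i : ℤ) {P0 P1 P2 : K[X]}
    (hP0 : P0.degree ≤ 2) (hP1 : P1.degree ≤ 2) (hP2 : P2.degree ≤ 2) :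
    (wenoCombination h x i P0 P1 P2).degree ≤ 4 := by
  have hterm : ∀ (c a b : K) {P : K[X]}, P.degree ≤ 2 → (quadraticWeight c a b * P).degree ≤ 4 :=
    fun c a b _ hP => degree_mul_le_of_le (degree_quadraticWeight_le c a b) hP
  exact (degree_add_le_of_le (degree_add_le_of_le (hterm _ _ _ hP0) (hterm _ _ _ hP1))
    (hterm _ _ _ hP2)).trans_eq (max_self _ |>.trans (max_self _))

variable [CharZero K]

lemma injective_of_uniform_grid (hh : h ≠ 0) (hx : ∀ j : ℤ, x j = x₀ + j * h) :
    Function.Injective x := by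
  intro j k hjk
  rw [hx, hx, add_right_inj, mul_left_inj' hh] at hjk
  exact_mod_cast hjk

lemma wenoWeights_add_add_eq_one (hh : h ≠ 0) (hx : ∀ j : ℤ, x j = x₀ + j * h) (i : ℤ) (t : K) :
    (quadraticWeight (12 * h ^ 2) (x (i + 1)) (x (i + 2))).eval t
      + (quadraticWeight (-(6 * h ^ 2)) (x (i - 2)) (x (i + 2))).eval t
      + (quadraticWeight (12 * h ^ 2) (x (i - 2)) (x (i - 1))).eval t = 1 := by
  simp only [eval_quadraticWeight, hx]
  push_cast
  field_simp
  ring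

lemma eval_wenoCombination_node (hh : h ≠ 0) (hx : ∀ j : ℤ, x j = x₀ + j * h) {i : ℤ}
    {u : K → K} {P0 P1 P2 : K[X]}
    (hP0 : ∀ j ∈ ({i - 2, i - 1, i} : Set ℤ), P0.eval (x j) = u (x j))
    (hP1 : ∀ j ∈ ({i - 1, i, i + 1} : Set ℤ), P1.eval (x j) = u (x j))
    (hP2 : ∀ j ∈ ({i, i + 1, i + 2} : Set ℤ), P2.eval (x j) = u (x j))
    {j : ℤ} (hj : j ∈ Finset.Icc (i - 2) (i + 2)) :
    (wenoCombination h x i P0 P1 P2).eval (x j) = u (x j) := by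
  have hj' : j = i - 2 ∨ j = i - 1 ∨ j = i ∨ j = i + 1 ∨ j = i + 2 := by
    rw [Finset.mem_Icc] at hj
    omega
  simp only [wenoCombination, eval_add, eval_mul]
  rcases hj' with rfl | rfl | rfl | rfl | rfl <;>
    refine add_mul_add_mul_eq_of_add_add_eq_one (wenoWeights_add_add_eq_one hh hx _ _) ?_ ?_ ?_ <;>
    simp [eval_quadraticWeight, hP0, hP1, hP2]

end WenoCombination

/-- The combination C₀P₀ + C₁P₁ + C₂P₂ of the three quadratic substencil interpolants,
with the position-dependent WENO linear weights, reproduces the unique degree ≤ 4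
Lagrange interpolant on the five-point big stencil. -/
theorem weno_combination_eq_lagrange (h x₀ : ℝ) (hh : 0 < h) (i : ℤ)
    (x : ℤ → ℝ) (hx : ∀ j : ℤ, x j = x₀ + (j : ℝ) * h)
    (u : ℝ → ℝ) (P0 P1 P2 Q : Polynomial ℝ)
    (hP0d : P0.degree ≤ 2) (hP1d : P1.degree ≤ 2) (hP2d : P2.degree ≤ 2)
    (hQd : Q.degree ≤ 4)
    (hP0 : ∀ j ∈ ({i - 2, i - 1, i} : Set ℤ), P0.eval (x j) = u (x j))
    (hP1 : ∀ j ∈ ({i - 1, i, i + 1} : Set ℤ), P1.eval (x j) = u (x j))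
    (hP2 : ∀ j ∈ ({i, i + 1, i + 2} : Set ℤ), P2.eval (x j) = u (x j))
    (hQ : ∀ j ∈ ({i - 2, i - 1, i, i + 1, i + 2} : Set ℤ), Q.eval (x j) = u (x j)) :
    ∀ t : ℝ,
      ((t - x (i + 1)) * (t - x (i + 2)) / (12 * h ^ 2)) * P0.eval t
        + (-((t - x (i - 2)) * (t - x (i + 2))) / (6 * h ^ 2)) * P1.eval t
        + ((t - x (i - 2)) * (t - x (i - 1)) / (12 * h ^ 2)) * P2.eval t
      = Q.eval t := by
  intro t
  have hcard : (Finset.Icc (i - 2) (i + 2)).card = 5 := by rw [Int.card_Icc]; omega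
  have hcomb : wenoCombination h x i P0 P1 P2 = Q := by
    refine eq_of_degrees_lt_of_eval_index_eq (Finset.Icc (i - 2) (i + 2))
      (injective_of_uniform_grid hh.ne' hx).injOn ?_ ?_ fun j hj => ?_
    · exact (degree_wenoCombination_le i hP0d hP1d hP2d).trans_lt (by rw [hcard]; decide)
    · exact hQd.trans_lt (by rw [hcard]; decide)
    · rw [eval_wenoCombination_node hh.ne' hx hP0 hP1 hP2 hj, hQ j]
      simp only [Finset.mem_Icc] at hj
      simp only [Set.mem_insert_iff, Set.mem_singleton_iff]
      omega
  rw [← hcomb, eval_wenoCombination]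
end

section
/- Let f : ℝ → ℝ be five times continuously differentiable on a neighborhood of x_i on a uniform grid of spacing h, and let f̂_{i+1/2} = (1/30)f(x_{i-2}) - (13/60)f(x_{i-1}) + (47/60)f(x_i) + (9/20)f(x_{i+1}) - (1/20)f(x_{i+2}). Then there is a function F with F(x_{i+1/2}) = f̂_{i+1/2} + O(h^5) such that (f̂_{i+1/2} - f̂_{i-1/2})/h = f'(x_i) + O(h^5) as h → 0. -/
/-!
The flux difference `f̂_{i+1/2} - f̂_{i-1/2}` is the six-point stencil
`A(h) = ∑ c_j f(x_i + k_j h)` with nodes `k_j = -3, …, 2`. Its `n`-th derivative at `h = 0` is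
`(∑ c_j k_jⁿ) f⁽ⁿ⁾(x_i)`, and the weights have moments `∑ c_j k_jⁿ = δ_{n1}` for `n ≤ 5`, so the
degree-5 Taylor polynomial of `A` at `0` is `f'(x_i) h`. The Lagrange remainder then gives
`|A(h) - f'(x_i) h| ≤ C h⁶`, and dividing by `h` gives the fifth-order bound.
-/

open Set Finset Nat

section Stencil

variable {𝕜 : Type*} [NontriviallyNormedField 𝕜]

lemma iteratedDeriv_comp_const_add_mul {f : 𝕜 → 𝕜} {n : ℕ} (hf : ContDiff 𝕜 n f) (x k t : 𝕜) :
    iteratedDeriv n (fun h => f (x + k * h)) t = k ^ n * iteratedDeriv n f (x + k * t) := by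
  have hshift : ContDiff 𝕜 n (fun y => f (x + y)) := hf.comp (contDiff_const.add contDiff_id)
  simpa [iteratedDeriv_comp_const_add] using congrFun (iteratedDeriv_comp_const_mul hshift k) t

lemma iteratedDeriv_stencil {ι : Type*} [Fintype ι] (c k : ι → 𝕜) {f : 𝕜 → 𝕜} {n : ℕ}
    (hf : ContDiff 𝕜 n f) (x t : 𝕜) :
    iteratedDeriv n (fun h => ∑ j, c j * f (x + k j * h)) t =
      ∑ j, c j * k j ^ n * iteratedDeriv n f (x + k j * t) := by
  have hcomp : ∀ j, ContDiff 𝕜 n (fun h => f (x + k j * h)) := fun j => hf.comp (by fun_prop)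
  rw [iteratedDeriv_fun_sum fun j _ => (contDiff_const.mul (hcomp j)).contDiffAt]
  refine Finset.sum_congr rfl fun j _ => ?_
  rw [iteratedDeriv_const_mul _ (hcomp j).contDiffAt, iteratedDeriv_comp_const_add_mul hf,
    mul_assoc]

end Stencil

theorem exists_abs_sub_taylor_le {g : ℝ → ℝ} {n : ℕ} (hg : ContDiff ℝ (n + 1) g) {a b : ℝ}
    (hab : a < b) :
    ∃ C, ∀ x ∈ Icc a b,
      |g x - ∑ m ∈ range (n + 1), iteratedDeriv m g a / m ! * (x - a) ^ m| ≤
        C * (x - a) ^ (n + 1) := by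
  obtain ⟨C, hC⟩ := exists_taylor_mean_remainder_bound hab.le hg.contDiffOn
  refine ⟨C, fun x hx => ?_⟩
  have hpoly : taylorWithinEval g n (Icc a b) a x =
      ∑ m ∈ range (n + 1), iteratedDeriv m g a / m ! * (x - a) ^ m := by
    rw [taylor_within_apply]
    refine Finset.sum_congr rfl fun m hm => ?_
    have hm' : (m : WithTop ℕ∞) ≤ n + 1 := by
      exact_mod_cast (Nat.lt_succ_iff.mp (mem_range.mp hm)).trans (Nat.le_succ n)
    rw [iteratedDerivWithin_eq_iteratedDeriv (uniqueDiffOn_Icc hab) (hg.of_le hm').contDiffAt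
      (left_mem_Icc.mpr hab.le), smul_eq_mul]
    ring
  simpa [hpoly] using hC x hx

theorem exists_abs_stencil_sub_deriv_mul_le {ι : Type*} [Fintype ι] (c k : ι → ℝ) {p : ℕ}
    (hp : 1 ≤ p) (hmoment : ∀ n ≤ p, ∑ j, c j * k j ^ n = if n = 1 then 1 else 0)
    {f : ℝ → ℝ} (hf : ContDiff ℝ (p + 1) f) (x : ℝ) :
    ∃ C, ∀ h ∈ Icc (0 : ℝ) 1, |∑ j, c j * f (x + k j * h) - deriv f x * h| ≤ C * h ^ (p + 1) := by
  have hstencil : ContDiff ℝ (p + 1) (fun h => ∑ j, c j * f (x + k j * h)) := by fun_prop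
  obtain ⟨C, hC⟩ := exists_abs_sub_taylor_le hstencil zero_lt_one
  refine ⟨C, fun h hh => ?_⟩
  have htaylor : ∑ m ∈ range (p + 1),
      iteratedDeriv m (fun h => ∑ j, c j * f (x + k j * h)) 0 / m ! * h ^ m =
        deriv f x * h := by
    calc _ = ∑ m ∈ range (p + 1), if m = 1 then deriv f x * h else 0 := by
          refine Finset.sum_congr rfl fun m hm => ?_
          have hm' : m ≤ p := Nat.lt_succ_iff.mp (mem_range.mp hm)
          rw [iteratedDeriv_stencil c k (hf.of_le (by exact_mod_cast hm'.trans (Nat.le_succ p)))]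
          simp only [mul_zero, add_zero, ← Finset.sum_mul, hmoment m hm']
          split_ifs with h1
          · simp [h1, iteratedDeriv_one]
          · simp
      _ = deriv f x * h := by simp [Finset.sum_ite_eq', Nat.lt_succ_iff.mpr hp]
  simpa only [sub_zero, htaylor] using hC h hh

noncomputable def fluxDifferenceWeights : Fin 6 → ℝ := ![-1 / 30, 1 / 4, -1, 1 / 3, 1 / 2, -1 / 20]

noncomputable def fluxDifferenceNodes : Fin 6 → ℝ := ![-3, -2, -1, 0, 1, 2]

lemma fluxDifference_moment (n : ℕ) (hn : n ≤ 5) :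
    ∑ j, fluxDifferenceWeights j * fluxDifferenceNodes j ^ n = if n = 1 then 1 else 0 := by
  interval_cases n <;> norm_num [Fin.sum_univ_succ, fluxDifferenceWeights, fluxDifferenceNodes]

lemma flux_sub_flux_eq_stencil (f : ℝ → ℝ) (xi h : ℝ) :
    ((1 / 30) * f (xi - 2 * h) - (13 / 60) * f (xi - h) + (47 / 60) * f xi
            + (9 / 20) * f (xi + h) - (1 / 20) * f (xi + 2 * h))
         - ((1 / 30) * f (xi - 3 * h) - (13 / 60) * f (xi - 2 * h) + (47 / 60) * f (xi - h)
            + (9 / 20) * f xi - (1 / 20) * f (xi + h)) =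
      ∑ j, fluxDifferenceWeights j * f (xi + fluxDifferenceNodes j * h) := by
  simp [Fin.sum_univ_succ, fluxDifferenceWeights, fluxDifferenceNodes]
  ring_nf

/-- Fifth order accuracy of the conservative finite difference with the linear
fifth order flux: for f ∈ C⁶, (f̂_{i+1/2} − f̂_{i-1/2})/h − f'(x_i) = O(h⁵). -/
theorem weno5_flux_difference_fifth_order (f : ℝ → ℝ) (hf : ContDiff ℝ 6 f) (xi : ℝ) :
    ∃ C > 0, ∃ δ > 0, ∀ h : ℝ, 0 < h → h < δ →
      |(((1 / 30) * f (xi - 2 * h) - (13 / 60) * f (xi - h) + (47 / 60) * f xi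
            + (9 / 20) * f (xi + h) - (1 / 20) * f (xi + 2 * h))
         - ((1 / 30) * f (xi - 3 * h) - (13 / 60) * f (xi - 2 * h) + (47 / 60) * f (xi - h)
            + (9 / 20) * f xi - (1 / 20) * f (xi + h))) / h
        - deriv f xi| ≤ C * h ^ 5 := by
  obtain ⟨C, hC⟩ := exists_abs_stencil_sub_deriv_mul_le fluxDifferenceWeights fluxDifferenceNodes
    (by norm_num) fluxDifference_moment hf xi
  refine ⟨|C| + 1, by positivity, 1, one_pos, fun h h0 h1 => ?_⟩
  rw [flux_sub_flux_eq_stencil, div_sub' h0.ne', mul_comm h (deriv f xi), abs_div, abs_of_pos h0, div_le_iff₀ h0]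
  calc _ ≤ C * h ^ 6 := hC h ⟨h0.le, h1.le⟩
    _ ≤ (|C| + 1) * h ^ 6 := by gcongr; linarith [le_abs_self C]
    _ = (|C| + 1) * h ^ 5 * h := by ring
end

section
/- If ε > 0 and all smoothness indicators β_0, β_1, β_2 satisfy β_k = O(h^2) (i.e., β_k ≤ C h^2 for a constant C and all small h > 0), then the nonlinear weights w_k = α_k/(α_0+α_1+α_2), α_k = d_k/(ε+β_k)^2 with positive linear weights d_k summing to 1, satisfy |w_k - d_k| ≤ (2C/ε)·h^2·(1 + (C/ε)h^2)·K for some constant K depending only on the d_k; in particular w_k → d_k as h → 0. -/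
open Finset Filter

/-- If the smoothness indicators are O(h²), the WENO nonlinear weights converge to
the linear weights as h → 0⁺. -/
theorem weno_weights_tendsto_linear (ε : ℝ) (hε : 0 < ε) (d : Fin 3 → ℝ)
    (hd : ∀ k, 0 < d k) (hd1 : ∑ k, d k = 1)
    (β : Fin 3 → ℝ → ℝ) (C : ℝ)
    (hβ : ∀ k, ∀ h : ℝ, 0 < h → 0 ≤ β k h ∧ β k h ≤ C * h ^ 2) :
    ∀ k, Tendsto
      (fun h : ℝ => (d k / (ε + β k h) ^ 2) / (∑ j, d j / (ε + β j h) ^ 2))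
      (nhdsWithin 0 (Set.Ioi 0)) (nhds (d k)) := by
  have hβ0 : ∀ j, Tendsto (fun h => β j h) (nhdsWithin 0 (Set.Ioi 0)) (nhds 0) := by
    intro j
    have hup : Tendsto (fun h : ℝ => C * h ^ 2) (nhdsWithin 0 (Set.Ioi 0)) (nhds 0) := by
      have : Tendsto (fun h : ℝ => C * h ^ 2) (nhds 0) (nhds (C * 0 ^ 2)) := by
        exact (tendsto_id.pow 2).const_mul C
      simpa using this.mono_left nhdsWithin_le_nhds
    apply squeeze_zero' ?_ ?_ hup
    · filter_upwards [self_mem_nhdsWithin] with h hh using (hβ j h hh).1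
    · filter_upwards [self_mem_nhdsWithin] with h hh using (hβ j h hh).2
  have hα : ∀ j, Tendsto (fun h => d j / (ε + β j h) ^ 2)
      (nhdsWithin 0 (Set.Ioi 0)) (nhds (d j / ε ^ 2)) := by
    intro j
    have : Tendsto (fun h => (ε + β j h) ^ 2) (nhdsWithin 0 (Set.Ioi 0)) (nhds (ε ^ 2)) := by
      have h1 : Tendsto (fun h => ε + β j h) (nhdsWithin 0 (Set.Ioi 0)) (nhds (ε + 0)) :=
        (tendsto_const_nhds : Tendsto (fun _ : ℝ => ε) _ _).add (hβ0 j)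
      simpa using h1.pow 2
    exact tendsto_const_nhds.div this (by positivity)
  intro k
  have hsum : Tendsto (fun h => ∑ j, d j / (ε + β j h) ^ 2)
      (nhdsWithin 0 (Set.Ioi 0)) (nhds (1 / ε ^ 2)) := by
    have := tendsto_finset_sum Finset.univ (fun j _ => hα j)
    have hval : ∑ j, d j / ε ^ 2 = 1 / ε ^ 2 := by
      rw [← Finset.sum_div, hd1]
    simpa [hval] using this
  have := (hα k).div hsum (by positivity)
  have heq : d k / ε ^ 2 / (1 / ε ^ 2) = d k := by
    field_simp
  rwa [heq] at this
end

section
/- The third order TVD Runge–Kutta method applied to u' = L(u), given by u^{(1)} = u^n + Δt L(u^n), u^{(2)} = (3/4)u^n + (1/4)u^{(1)} + (1/4)Δt L(u^{(1)}), u^{n+1} = (1/3)u^n + (2/3)u^{(2)} + (2/3)Δt L(u^{(2)}), is a convex combination of forward Euler steps: each stage has nonnegative coefficients on u^n and previous stages summing to 1. -/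
/-- The Shu–Osher third order TVD Runge–Kutta scheme is strong stability preserving:
if forward Euler is nonexpansive in a norm, so is the full third order step. -/
theorem tvd_rk3_ssp {E : Type*} [NormedAddCommGroup E] [NormedSpace ℝ E]
    (L : E → E) (Δt : ℝ) (hΔt : 0 < Δt)
    (hFE : ∀ v : E, ‖v + Δt • L v‖ ≤ ‖v‖) (u : E) :
    ∀ u1 u2 u3 : E,
      u1 = u + Δt • L u →
      u2 = (3 / 4 : ℝ) • u + (1 / 4 : ℝ) • u1 + ((1 / 4 : ℝ) * Δt) • L u1 →
      u3 = (1 / 3 : ℝ) • u + (2 / 3 : ℝ) • u2 + ((2 / 3 : ℝ) * Δt) • L u2 →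
      ‖u3‖ ≤ ‖u‖ := by
  intro u1 u2 u3 h1 h2 h3
  have hu1 : ‖u1‖ ≤ ‖u‖ := h1 ▸ hFE u
  have h2' : u2 = (3 / 4 : ℝ) • u + (1 / 4 : ℝ) • (u1 + Δt • L u1) := by
    rw [h2]; module
  have hu2 : ‖u2‖ ≤ ‖u‖ := by
    calc ‖u2‖ ≤ (3/4 : ℝ) * ‖u‖ + (1/4 : ℝ) * ‖u1 + Δt • L u1‖ := by
          rw [h2']
          refine (norm_add_le _ _).trans ?_
          simp [← smul_add, norm_smul]
      _ ≤ (3/4 : ℝ) * ‖u‖ + (1/4 : ℝ) * ‖u1‖ := by nlinarith [hFE u1]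
      _ ≤ ‖u‖ := by nlinarith
  have h3' : u3 = (1 / 3 : ℝ) • u + (2 / 3 : ℝ) • (u2 + Δt • L u2) := by
    rw [h3]; module
  calc ‖u3‖ ≤ (1/3 : ℝ) * ‖u‖ + (2/3 : ℝ) * ‖u2 + Δt • L u2‖ := by
        rw [h3']
        refine (norm_add_le _ _).trans ?_
        simp [← smul_add, norm_smul]
    _ ≤ (1/3 : ℝ) * ‖u‖ + (2/3 : ℝ) * ‖u2‖ := by nlinarith [hFE u2]
    _ ≤ ‖u‖ := by nlinarith
end
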